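/- Let R be a finite commutative chain ring with residue field of order 2 and maximal ideal ⟨s⟩ of nilpotency index t, and G cyclic of order p^n (p odd prime) generated by a, with 2 a primitive root mod p^n. For e = \widehat{⟨a^{p^j}⟩} − \widehat{⟨a^{p^{j-1}}⟩} (1 ≤ j ≤ n) and 0 ≤ k < t, the ideal ⟨s^k e⟩ of R[G] has cardinality 2^{(t-k)(p^j − p^{j-1})}. -/

import Mathlib

/-!
Put `H₁ = ⟨a^(p^j)⟩ ≤ H₀ = ⟨a^(p^(j-1))⟩`. Every subgroup order divides the odd number `p^n`, so it
is a unit in `R` (the residue field has characteristic `2`); hence the averages `Ĥ₁, Ĥ₀` are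
idempotents with `Ĥ₁ Ĥ₀ = Ĥ₀`, and `e = Ĥ₁ - Ĥ₀` is an idempotent orthogonal to `Ĥ₀` with
`e + Ĥ₀ = Ĥ₁`. Thus `⟨c Ĥ₁⟩ ≅ ⟨c e⟩ × ⟨c Ĥ₀⟩` for `c = s^k`. The ideal `⟨c Ĥ⟩` consists of the
right `H`-invariant elements of `R[G]` with coefficients in `s^k R`, i.e. of the functions
`G ⧸ H → s^k R`, so it has `|s^k R|^[G:H]` elements, and `|s^k R| = 2^(t-k)` because every step
`s^i R ⊃ s^(i+1) R` of the filtration is a copy of the residue field. Dividing gives the result.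
-/

open IsLocalRing MonoidAlgebra

section ChainRing

variable {R : Type*} [CommRing R] [IsLocalRing R] {s : R}

lemma pow_notMem_span_pow_succ (hM : maximalIdeal R = Ideal.span {s}) {i : ℕ} (hi : s ^ i ≠ 0) :
    s ^ i ∉ Ideal.span {s ^ (i + 1)} := by
  rintro hmem
  obtain ⟨c, hc⟩ := Ideal.mem_span_singleton'.mp hmem
  have hunit : IsUnit (1 - c * s) := isUnit_one_sub_self_of_mem_nonunits _ <| by
    rw [← mem_maximalIdeal, hM]
    exact Ideal.mul_mem_left _ _ (Ideal.mem_span_singleton_self s)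
  exact hi (hunit.mul_left_eq_zero.mp (by linear_combination -hc))

lemma card_span_pow_eq_two_mul (hres : Nat.card (R ⧸ maximalIdeal R) = 2)
    (hM : maximalIdeal R = Ideal.span {s}) {i : ℕ} (hi : s ^ i ≠ 0) :
    Nat.card (Ideal.span {s ^ i}) = 2 * Nat.card (Ideal.span {s ^ (i + 1)}) := by
  set J := Ideal.span {s ^ i}
  have hle : Ideal.span {s ^ (i + 1)} ≤ J :=
    Ideal.span_singleton_le_span_singleton.mpr (pow_dvd_pow s i.le_succ)
  set N : Submodule R J := Submodule.comap J.subtype (Ideal.span {s ^ (i + 1)})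
  let g : R →ₗ[R] J ⧸ N :=
    N.mkQ ∘ₗ LinearMap.toSpanSingleton R J ⟨s ^ i, Ideal.mem_span_singleton_self _⟩
  have hg : Function.Surjective g := N.mkQ_surjective.comp fun y =>
    (Submodule.mem_span_singleton.mp y.2).imp fun _ hc => Subtype.ext hc
  have mem_ker : ∀ x, x ∈ LinearMap.ker g ↔ x * s ^ i ∈ Ideal.span {s ^ (i + 1)} := fun x => by
    simp [g, N, Submodule.Quotient.mk_eq_zero]
  have hker : LinearMap.ker g = maximalIdeal R := by
    refine ((maximalIdeal.isMaximal R).eq_of_le ?_ ?_).symm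
    · rw [Ne, Submodule.eq_top_iff', not_forall]
      exact ⟨1, by simpa [mem_ker] using pow_notMem_span_pow_succ hM hi⟩
    · intro x hx
      rw [hM] at hx
      obtain ⟨c, rfl⟩ := Ideal.mem_span_singleton'.mp hx
      exact (mem_ker _).mpr (Ideal.mem_span_singleton'.mpr ⟨c, by ring⟩)
  rw [Submodule.card_eq_card_quotient_mul_card N,
    ← Nat.card_congr (g.quotKerEquivOfSurjective hg).toEquiv, hker, hres,
    Nat.card_congr (Submodule.comapSubtypeEquivOfLe hle).toEquiv, mul_comm]

lemma card_span_pow (hres : Nat.card (R ⧸ maximalIdeal R) = 2)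
    (hM : maximalIdeal R = Ideal.span {s}) {t : ℕ} (hst : s ^ t = 0) (hst' : s ^ (t - 1) ≠ 0)
    (k : ℕ) : Nat.card (Ideal.span {s ^ k}) = 2 ^ (t - k) := by
  induction h : t - k generalizing k with
  | zero =>
    rw [pow_eq_zero_of_le (by omega) hst, Ideal.span_singleton_eq_bot.mpr rfl]
    exact Nat.card_unique
  | succ d ih =>
    have hk : s ^ k ≠ 0 := fun h => hst' (pow_eq_zero_of_le (by omega) h)
    rw [card_span_pow_eq_two_mul hres hM hk, ih (k + 1) (by omega), pow_succ']

lemma isUnit_natCast_of_odd (hres : Nat.card (R ⧸ maximalIdeal R) = 2) {m : ℕ} (hm : Odd m) :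
    IsUnit (m : R) := by
  have two_eq_zero : (2 : R ⧸ maximalIdeal R) = 0 := by
    simpa [hres] using card_nsmul_eq_zero' (x := (1 : R ⧸ maximalIdeal R))
  obtain ⟨l, rfl⟩ := hm
  by_contra h
  have h0 : ((2 * l + 1 : ℕ) : R ⧸ maximalIdeal R) = 0 := by
    rw [← map_natCast (Ideal.Quotient.mk _)]
    exact Ideal.Quotient.eq_zero_iff_mem.mpr h
  push_cast at h0
  simp [two_eq_zero] at h0

end ChainRing

section SubgroupAverage

variable (R : Type*) [CommRing R] {G : Type*} [Group G] [Finite G]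

noncomputable def subgroupAverage (H : Subgroup G) : MonoidAlgebra R G :=
  Ring.inverse (Nat.card H : R) • ∑ h ∈ (H : Set G).toFinite.toFinset, single h (1 : R)

variable {R}

lemma subgroupAverage_mul_single_of_mem {H : Subgroup G} {h : G} (hh : h ∈ H) :
    subgroupAverage R H * single h 1 = subgroupAverage R H := by
  simp only [subgroupAverage, smul_mul_assoc, Finset.sum_mul, single_mul_single, one_mul]
  congr 1
  exact Finset.sum_nbij' (· * h) (· * h⁻¹) (by simp [H.mul_mem_cancel_right hh])
    (by simp [H.mul_mem_cancel_right (inv_mem hh)]) (by simp) (by simp) (by simp)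

lemma mul_subgroupAverage_eq_self_iff {H : Subgroup G} (hH : IsUnit (Nat.card H : R))
    {x : MonoidAlgebra R G} : x * subgroupAverage R H = x ↔ ∀ h ∈ H, x * single h 1 = x := by
  refine ⟨fun hx h hh => by rw [← hx, mul_assoc, subgroupAverage_mul_single_of_mem hh],
    fun hx => ?_⟩
  have hsum :
      ∑ h ∈ (H : Set G).toFinite.toFinset, x * single h (1 : R) = (Nat.card H : R) • x := by
    rw [Finset.sum_congr rfl fun h hh => hx h ((H : Set G).toFinite.mem_toFinset.mp hh),
      Finset.sum_const, Nat.cast_smul_eq_nsmul,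
      ← Nat.card_eq_card_finite_toFinset, SetLike.coe_sort_coe]
  rw [subgroupAverage, mul_smul_comm, Finset.mul_sum, hsum, smul_smul,
    Ring.inverse_mul_cancel _ hH, one_smul]

lemma subgroupAverage_mul_of_le {H K : Subgroup G} (hHK : H ≤ K) (hH : IsUnit (Nat.card H : R)) :
    subgroupAverage R K * subgroupAverage R H = subgroupAverage R K :=
  (mul_subgroupAverage_eq_self_iff hH).mpr fun _ hh => subgroupAverage_mul_single_of_mem (hHK hh)

lemma isIdempotentElem_subgroupAverage {H : Subgroup G} (hH : IsUnit (Nat.card H : R)) :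
    IsIdempotentElem (subgroupAverage R H) :=
  subgroupAverage_mul_of_le le_rfl hH

end SubgroupAverage

lemma MonoidAlgebra.mem_span_smul_iff_of_isIdempotentElem {R G : Type*} [CommRing R] [Monoid G]
    [Finite G] {e : MonoidAlgebra R G} (he : IsIdempotentElem e) (r : R) {x : MonoidAlgebra R G} :
    x ∈ Ideal.span {r • e} ↔ x * e = x ∧ ∀ g, x.coeff g ∈ Ideal.span {r} := by
  constructor
  · intro hx
    obtain ⟨y, rfl⟩ := Ideal.mem_span_singleton'.mp hx
    refine ⟨by rw [mul_assoc, smul_mul_assoc, he.eq], fun g => ?_⟩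
    rw [mul_smul_comm, coeff_smul_apply, smul_eq_mul]
    exact Ideal.mem_span_singleton'.mpr ⟨_, mul_comm _ _⟩
  · rintro ⟨hxe, hx⟩
    choose c hc using fun g => Ideal.mem_span_singleton'.mp (hx g)
    have hxc : x = r • ofCoeff (Finsupp.equivFunOnFinite.symm c) := by
      ext g
      simp [← hc g, mul_comm]
    rw [← hxe, hxc, smul_mul_assoc, ← mul_smul_comm]
    exact Ideal.mul_mem_left _ _ (Ideal.mem_span_singleton_self _)

section CosetFunctions

variable {R : Type*} [CommRing R] {G : Type*} [Group G] [Finite G]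

lemma card_span_smul_subgroupAverage {H : Subgroup G} (hH : IsUnit (Nat.card H : R)) (r : R) :
    Nat.card (Ideal.span {r • subgroupAverage R H}) = Nat.card (Ideal.span {r}) ^ H.index := by
  let Φ : (G ⧸ H → Ideal.span {r}) → MonoidAlgebra R G :=
    fun f => ofCoeff (Finsupp.equivFunOnFinite.symm fun g => f g)
  have hΦ : Function.Injective Φ := by
    intro f f' hff
    funext q
    induction q using QuotientGroup.induction_on with
    | H g => exact Subtype.ext congr(($hff).coeff g)
  have hrange : Set.range Φ = Ideal.span {r • subgroupAverage R H} := by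
    ext x
    rw [SetLike.mem_coe,
      mem_span_smul_iff_of_isIdempotentElem (isIdempotentElem_subgroupAverage hH),
      mul_subgroupAverage_eq_self_iff hH]
    constructor
    · rintro ⟨f, rfl⟩
      refine ⟨fun h hh => ?_, fun g => (f g).2⟩
      ext g
      simp [Φ, QuotientGroup.mk_mul_of_mem g (inv_mem hh)]
    · rintro ⟨hinv, hmem⟩
      refine ⟨fun q => ⟨x.coeff q.out, hmem _⟩, ?_⟩
      ext g
      obtain ⟨h, hh⟩ := QuotientGroup.mk_out_eq_mul H g
      simpa [Φ, hh] using congr(($(hinv _ (inv_mem h.2))).coeff g)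
  rw [← SetLike.coe_sort_coe, ← hrange, Nat.card_range_of_injective hΦ, Nat.card_fun,
    Subgroup.index]

end CosetFunctions

section OrthogonalIdempotents

variable {A : Type*} [CommRing A] {e f c : A}

lemma mul_eq_self_of_mem_span_mul (he : IsIdempotentElem e) {x : A}
    (hx : x ∈ Ideal.span {c * e}) : x * e = x := by
  obtain ⟨y, rfl⟩ := Ideal.mem_span_singleton'.mp hx
  rw [mul_assoc, mul_assoc, he.eq]

lemma mul_eq_zero_of_mem_span_mul (hef : e * f = 0) {x : A} (hx : x ∈ Ideal.span {c * e}) :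
    x * f = 0 := by
  obtain ⟨y, rfl⟩ := Ideal.mem_span_singleton'.mp hx
  rw [mul_assoc, mul_assoc, hef, mul_zero, mul_zero]

def spanMulAddEquiv (he : IsIdempotentElem e) (hf : IsIdempotentElem f) (hef : e * f = 0) :
    Ideal.span {c * (e + f)} ≃ Ideal.span {c * e} × Ideal.span {c * f} := by
  have hfe : f * e = 0 := by rw [mul_comm, hef]
  have hsum : IsIdempotentElem (e + f) := he.add hf (by rw [hef, hfe, add_zero])
  refine
    { toFun z := (⟨z * e, ?_⟩, ⟨z * f, ?_⟩)
      invFun w := ⟨w.1 + w.2, add_mem ?_ ?_⟩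
      left_inv z := Subtype.ext ?_
      right_inv w := Prod.ext (Subtype.ext ?_) (Subtype.ext ?_) }
  · obtain ⟨y, hy⟩ := Ideal.mem_span_singleton'.mp z.2
    exact Ideal.mem_span_singleton'.mpr ⟨y, by
      rw [← hy]; linear_combination (-(y * c)) * (he.eq + hfe)⟩
  · obtain ⟨y, hy⟩ := Ideal.mem_span_singleton'.mp z.2
    exact Ideal.mem_span_singleton'.mpr ⟨y, by
      rw [← hy]; linear_combination (-(y * c)) * (hf.eq + hef)⟩
  · obtain ⟨y, hy⟩ := Ideal.mem_span_singleton'.mp w.1.2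
    exact Ideal.mem_span_singleton'.mpr ⟨y * e, by
      rw [← hy]; linear_combination (y * c) * (he.eq + hef)⟩
  · obtain ⟨y, hy⟩ := Ideal.mem_span_singleton'.mp w.2.2
    exact Ideal.mem_span_singleton'.mpr ⟨y * f, by
      rw [← hy]; linear_combination (y * c) * (hf.eq + hfe)⟩
  · dsimp only
    rw [← mul_add, mul_eq_self_of_mem_span_mul hsum z.2]
  · dsimp only
    rw [add_mul, mul_eq_self_of_mem_span_mul he w.1.2, mul_eq_zero_of_mem_span_mul hfe w.2.2,
      add_zero]
  · dsimp only
    rw [add_mul, mul_eq_self_of_mem_span_mul hf w.2.2, mul_eq_zero_of_mem_span_mul hef w.1.2,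
      zero_add]

end OrthogonalIdempotents

lemma index_zpowers_pow {G : Type*} [Group G] [Finite G] {a : G}
    (hgen : ∀ x : G, x ∈ Subgroup.zpowers a) {m : ℕ} (hm : m ∣ orderOf a) :
    (Subgroup.zpowers (a ^ m)).index = m := by
  have hm0 : m ≠ 0 := by rintro rfl; exact (orderOf_pos a).ne' (zero_dvd_iff.mp hm)
  have h := (Subgroup.zpowers (a ^ m)).card_mul_index
  rw [Nat.card_zpowers, orderOf_pow_of_dvd hm0 hm,
    ← orderOf_eq_card_of_forall_mem_zpowers hgen] at h
  nth_rw 2 [← Nat.div_mul_cancel hm] at h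
  exact Nat.eq_of_mul_eq_mul_left (Nat.div_pos (Nat.le_of_dvd (orderOf_pos a) hm) hm0.bot_lt) h

theorem card_code_of_idempotent_general
    (R : Type*) [CommRing R] [Finite R] [IsLocalRing R]
    (hres : Nat.card (R ⧸ IsLocalRing.maximalIdeal R) = 2)
    (s : R) (hM : IsLocalRing.maximalIdeal R = Ideal.span {s})
    (t : ℕ) (hst : s ^ t = 0) (hst' : s ^ (t - 1) ≠ 0)
    (p n : ℕ) (hpodd : Odd p)
    (G : Type*) [CommGroup G] [Fintype G]
    (a : G) (hgen : ∀ x : G, x ∈ Subgroup.zpowers a) (hord : orderOf a = p ^ n)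
    (j : ℕ) (hjn : j ≤ n) (k : ℕ) :
    let hat : Subgroup G → MonoidAlgebra R G := fun H =>
      Ring.inverse ((Nat.card H : R)) •
        ∑ h ∈ (H : Set G).toFinite.toFinset, MonoidAlgebra.single h (1 : R)
    let e : MonoidAlgebra R G :=
      hat (Subgroup.zpowers (a ^ p ^ j)) - hat (Subgroup.zpowers (a ^ p ^ (j - 1)))
    Nat.card (Ideal.span {s ^ k • e} : Ideal (MonoidAlgebra R G)) =
      2 ^ ((t - k) * (p ^ j - p ^ (j - 1))) := by
  intro hat e
  set H₁ := Subgroup.zpowers (a ^ p ^ j)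
  set H₀ := Subgroup.zpowers (a ^ p ^ (j - 1))
  show Nat.card (Ideal.span {s ^ k • (subgroupAverage R H₁ - subgroupAverage R H₀)}) = _
  have hunit (H : Subgroup G) : IsUnit (Nat.card H : R) := by
    refine isUnit_natCast_of_odd hres ((hpodd.pow (n := n)).of_dvd_nat ?_)
    rw [← hord, orderOf_eq_card_of_forall_mem_zpowers hgen]
    exact H.card_subgroup_dvd_card
  have hle : H₁ ≤ H₀ := by
    obtain ⟨c, hc⟩ := pow_dvd_pow p (Nat.sub_le j 1)
    rw [Subgroup.zpowers_le, hc, pow_mul]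
    exact Subgroup.pow_mem _ (Subgroup.mem_zpowers _) c
  have h₀₁ := subgroupAverage_mul_of_le hle (hunit H₁)
  have he₀ := isIdempotentElem_subgroupAverage (hunit H₀)
  have he := he₀.sub (isIdempotentElem_subgroupAverage (hunit H₁)) h₀₁ (by rw [mul_comm, h₀₁])
  have horth : (subgroupAverage R H₁ - subgroupAverage R H₀) * subgroupAverage R H₀ = 0 := by
    rw [sub_mul, mul_comm, h₀₁, he₀.eq, sub_self]
  have hsplit := Nat.card_congr (spanMulAddEquiv (c := algebraMap R _ (s ^ k)) he he₀ horth)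
  rw [Nat.card_prod, sub_add_cancel, ← Algebra.smul_def, ← Algebra.smul_def, ← Algebra.smul_def,
    card_span_smul_subgroupAverage (hunit H₁), card_span_smul_subgroupAverage (hunit H₀),
    index_zpowers_pow hgen (hord ▸ pow_dvd_pow p hjn),
    index_zpowers_pow hgen (hord ▸ pow_dvd_pow p (by omega)), card_span_pow hres hM hst hst',
    ← pow_sub_mul_pow _ (Nat.pow_le_pow_right hpodd.pos (Nat.sub_le j 1))] at hsplit
  rw [pow_mul]
  exact (Nat.eq_of_mul_eq_mul_right (by positivity) hsplit).symm

/-- Let `R` be a finite commutative chain ring with residue field of order `2` and maximal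
ideal `⟨s⟩` of nilpotency index `t`, and `G` cyclic of order `p^n` (`p` an odd prime)
generated by `a`, with `2` a primitive root mod `p^n`. For the idempotent
`e = ⟨a^(p^j)⟩^ − ⟨a^(p^(j-1))⟩^` (`1 ≤ j ≤ n`) and `0 ≤ k < t`, the ideal `⟨s^k e⟩` of
`R[G]` has cardinality `2^((t-k)(p^j − p^(j-1)))`. -/
theorem card_code_of_idempotent
    (R : Type*) [CommRing R] [Finite R] [IsLocalRing R]
    (hchain : ∀ I J : Ideal R, I ≤ J ∨ J ≤ I)
    (hres : Nat.card (R ⧸ IsLocalRing.maximalIdeal R) = 2)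
    (s : R) (hM : IsLocalRing.maximalIdeal R = Ideal.span {s})
    (t : ℕ) (ht : 1 ≤ t) (hst : s ^ t = 0) (hst' : s ^ (t - 1) ≠ 0)
    (p n : ℕ) (hp : p.Prime) (hpodd : Odd p)
    (G : Type*) [CommGroup G] [Fintype G]
    (a : G) (hgen : ∀ x : G, x ∈ Subgroup.zpowers a) (hord : orderOf a = p ^ n)
    (h2 : orderOf ((2 : ZMod (p ^ n))) = Nat.totient (p ^ n))
    (j : ℕ) (hj1 : 1 ≤ j) (hjn : j ≤ n) (k : ℕ) (hk : k < t) :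
    let hat : Subgroup G → MonoidAlgebra R G := fun H =>
      Ring.inverse ((Nat.card H : R)) •
        ∑ h ∈ (H : Set G).toFinite.toFinset, MonoidAlgebra.single h (1 : R)
    let e : MonoidAlgebra R G :=
      hat (Subgroup.zpowers (a ^ p ^ j)) - hat (Subgroup.zpowers (a ^ p ^ (j - 1)))
    Nat.card (Ideal.span {s ^ k • e} : Ideal (MonoidAlgebra R G)) =
      2 ^ ((t - k) * (p ^ j - p ^ (j - 1))) :=
  card_code_of_idempotent_general R hres s hM t hst hst' p n hpodd G a hgen hord j hjn k
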